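/- Conformal factor of the contact Hamiltonian flow: Let n ≥ 1 and let H : ℝⁿ × ℝⁿ × ℝ → ℝ be twice continuously differentiable. Define the contact Hamiltonian vector field X on ℝⁿ × ℝⁿ × ℝ by X(x,p,z) := (∇_p H(x,p,z), −∇_x H(x,p,z) − (∂_z H(x,p,z)) p, ⟨p, ∇_p H(x,p,z)⟩ − H(x,p,z)). Let φ : ℝ × (ℝⁿ × ℝⁿ × ℝ) → ℝⁿ × ℝⁿ × ℝ be twice continuously differentiable with φ(0,w) = w and ∂_t φ(t,w) = X(φ(t,w)) for all (t,w). Write φ(t,w) = (x_t(w), p_t(w), z_t(w)). Then for every t ∈ ℝ, every w = (x,p,z), and every direction v = (v_x, v_p, v_z), one has D z_t(w)[v] − ⟨p_t(w), D x_t(w)[v]⟩ = exp(−∫₀ᵗ ∂_z H(φ(s,w)) ds) · (v_z − ⟨p, v_x⟩); i.e. the pullback of the contact form θ = dz − ⟨p, dx⟩ under the time-t flow equals the conformal factor exp(−∫₀ᵗ ∂_z H ∘ φ_s ds) times θ. -/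

import Mathlib

/-!
Fix `w, v` and let `J t = D(φ t)(w) v`. Since `φ` is `C²`, the mixed partial derivatives of `φ`
commute, so `J` solves the variational equation `J' = DX(φ t w) J`. Differentiating
`f t = θ_{φ t w}(J t) = (J t)_z - ⟪p_t, (J t)_x⟫` along the flow, every term containing `∇ₓH` or
`∇ₚH` cancels (this is `L_X θ = -(∂_z H) θ`), leaving the scalar linear equation
`f' = -(∂_z H ∘ φ) f`. Its solution is `f t = exp (-∫₀ᵗ ∂_z H ∘ φ) * f 0`, and `f 0` is the
contact form evaluated at `(w, v)` because `φ 0 = id`.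
-/

open scoped RealInnerProductSpace
noncomputable section

/-- The contact Hamiltonian vector field
`X(x,p,z) = (∇ₚH, −∇ₓH − (∂_z H) p, ⟨p, ∇ₚH⟩ − H)`. -/
def contactField {n : ℕ}
    (H : EuclideanSpace ℝ (Fin n) × EuclideanSpace ℝ (Fin n) × ℝ → ℝ)
    (w : EuclideanSpace ℝ (Fin n) × EuclideanSpace ℝ (Fin n) × ℝ) :
    EuclideanSpace ℝ (Fin n) × EuclideanSpace ℝ (Fin n) × ℝ :=
  (gradient (fun q => H (w.1, q, w.2.2)) w.2.1,
   -gradient (fun y => H (y, w.2.1, w.2.2)) w.1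
     - (deriv (fun ζ => H (w.1, w.2.1, ζ)) w.2.2) • w.2.1,
   ⟪w.2.1, gradient (fun q => H (w.1, q, w.2.2)) w.2.1⟫ - H w)

section Partials

variable {E : Type*} [NormedAddCommGroup E] [InnerProductSpace ℝ E]
  {H : E × E × ℝ → ℝ} {y : E × E × ℝ} {m k : WithTop ℕ∞}

theorem deriv_partialZ (hH : DifferentiableAt ℝ H y) :
    deriv (fun z => H (y.1, y.2.1, z)) y.2.2 = fderiv ℝ H y (0, 0, 1) := by
  have hincl : HasDerivAt (fun z : ℝ => (y.1, y.2.1, z)) ((0 : E), (0 : E), (1 : ℝ)) y.2.2 :=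
    (hasDerivAt_const _ _).prodMk ((hasDerivAt_const _ _).prodMk (hasDerivAt_id _))
  exact (hH.hasFDerivAt.comp_hasDerivAt y.2.2 hincl).deriv

theorem ContDiff.deriv_partialZ (hH : ContDiff ℝ m H) (hk : k + 1 ≤ m) :
    ContDiff ℝ k fun y : E × E × ℝ => deriv (fun z => H (y.1, y.2.1, z)) y.2.2 :=
  (ContDiff.fderiv (f := fun (y : E × E × ℝ) z => H (y.1, y.2.1, z)) (by fun_prop) (by fun_prop)
    hk).clm_apply contDiff_const

variable [CompleteSpace E]

theorem inner_gradient_partialX (hH : DifferentiableAt ℝ H y) (u : E) :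
    ⟪gradient (fun x => H (x, y.2.1, y.2.2)) y.1, u⟫ = fderiv ℝ H y (u, 0, 0) := by
  have h : HasFDerivAt (fun x => H (x, y.2.1, y.2.2))
      ((fderiv ℝ H y).comp (.inl ℝ E (E × ℝ))) y.1 :=
    hH.hasFDerivAt.comp y.1 (hasFDerivAt_prodMk_left _ _)
  rw [inner_gradient_left, h.fderiv]
  rfl

theorem inner_gradient_partialP (hH : DifferentiableAt ℝ H y) (u : E) :
    ⟪gradient (fun p => H (y.1, p, y.2.2)) y.2.1, u⟫ = fderiv ℝ H y (0, u, 0) := by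
  have h : HasFDerivAt (fun p => H (y.1, p, y.2.2))
      ((fderiv ℝ H y).comp ((ContinuousLinearMap.inr ℝ E (E × ℝ)).comp (.inl ℝ E ℝ))) y.2.1 :=
    hH.hasFDerivAt.comp y.2.1 <|
      (hasFDerivAt_prodMk_right _ _).comp y.2.1 (hasFDerivAt_prodMk_left _ _)
  rw [inner_gradient_left, h.fderiv]
  rfl

theorem fderiv_apply_eq_partials (hH : DifferentiableAt ℝ H y) (u : E × E × ℝ) :
    fderiv ℝ H y u = ⟪gradient (fun x => H (x, y.2.1, y.2.2)) y.1, u.1⟫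
      + ⟪gradient (fun p => H (y.1, p, y.2.2)) y.2.1, u.2.1⟫
      + deriv (fun z => H (y.1, y.2.1, z)) y.2.2 * u.2.2 := by
  have hu : u = (u.1, 0, 0) + (0, u.2.1, 0) + u.2.2 • ((0 : E), (0 : E), (1 : ℝ)) := by simp
  rw [inner_gradient_partialX hH, inner_gradient_partialP hH, deriv_partialZ hH, mul_comm,
    ← smul_eq_mul, ← map_smul, ← map_add, ← map_add, ← hu]

theorem ContDiff.gradient_partialX (hH : ContDiff ℝ m H) (hk : k + 1 ≤ m) :
    ContDiff ℝ k fun y : E × E × ℝ => gradient (fun x => H (x, y.2.1, y.2.2)) y.1 :=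
  (InnerProductSpace.toDual ℝ E).symm.contDiff.comp <|
    ContDiff.fderiv (f := fun (y : E × E × ℝ) x => H (x, y.2.1, y.2.2)) (by fun_prop)
      contDiff_fst hk

theorem ContDiff.gradient_partialP (hH : ContDiff ℝ m H) (hk : k + 1 ≤ m) :
    ContDiff ℝ k fun y : E × E × ℝ => gradient (fun p => H (y.1, p, y.2.2)) y.2.1 :=
  (InnerProductSpace.toDual ℝ E).symm.contDiff.comp <|
    ContDiff.fderiv (f := fun (y : E × E × ℝ) p => H (y.1, p, y.2.2)) (by fun_prop)
      (by fun_prop) hk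

end Partials

abbrev PhaseSpace (n : ℕ) := EuclideanSpace ℝ (Fin n) × EuclideanSpace ℝ (Fin n) × ℝ

-- `θ = dz - ⟪p, dx⟫` at the point `y`, evaluated on the tangent vector `u`.
def contactForm {n : ℕ} (y u : PhaseSpace n) : ℝ := u.2.2 - ⟪y.2.1, u.1⟫

section ContactField

variable {n : ℕ} {H : PhaseSpace n → ℝ}

theorem contDiff_contactField (hH : ContDiff ℝ 2 H) : ContDiff ℝ 1 (contactField H) := by
  have hGx := hH.gradient_partialX (k := 1) le_rfl
  have hGp := hH.gradient_partialP (k := 1) le_rfl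
  have hHz := hH.deriv_partialZ (k := 1) le_rfl
  exact hGp.prodMk ((hGx.neg.sub (hHz.smul contDiff_snd.fst)).prodMk
    ((contDiff_snd.fst.inner ℝ hGp).sub (hH.of_le one_le_two)))

theorem contactForm_fderiv_contactField_sub (hH : ContDiff ℝ 2 H) (y u : PhaseSpace n) :
    contactForm y (fderiv ℝ (contactField H) y u) - ⟪(contactField H y).2.1, u.1⟫
      = -deriv (fun z => H (y.1, y.2.1, z)) y.2.2 * contactForm y u := by
  set Gp := fun y : PhaseSpace n => gradient (fun p => H (y.1, p, y.2.2)) y.2.1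
  have hGp : DifferentiableAt ℝ Gp y :=
    (hH.gradient_partialP (k := 1) le_rfl).differentiable one_ne_zero y
  have hHy : DifferentiableAt ℝ H y := hH.differentiable two_ne_zero y
  have hX := ((contDiff_contactField hH).differentiable one_ne_zero y).hasFDerivAt
  have hp : DifferentiableAt ℝ (fun y : PhaseSpace n => y.2.1) y := differentiableAt_snd.fst
  have hdx : (fderiv ℝ (contactField H) y u).1 = fderiv ℝ Gp y u :=
    (congrArg (· u) hX.fst.fderiv).symm
  have hdz : (fderiv ℝ (contactField H) y u).2.2
      = ⟪y.2.1, fderiv ℝ Gp y u⟫ + ⟪u.2.1, Gp y⟫ - fderiv ℝ H y u := by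
    have hcomp : fderiv ℝ (fun y => ⟪y.2.1, Gp y⟫ - H y) y u
        = (fderiv ℝ (contactField H) y u).2.2 :=
      congrArg (· u) hX.snd.snd.fderiv
    rw [← hcomp, fderiv_fun_sub (hp.inner ℝ hGp) hHy, sub_apply, fderiv_inner_apply ℝ hp hGp,
      hasFDerivAt_snd.fst.fderiv]
    rfl
  have hXp : (contactField H y).2.1 = -gradient (fun x => H (x, y.2.1, y.2.2)) y.1
      - deriv (fun z => H (y.1, y.2.1, z)) y.2.2 • y.2.1 := rfl
  rw [contactForm, contactForm, hdx, hdz, hXp, fderiv_apply_eq_partials hHy u, inner_sub_left,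
    inner_neg_left, real_inner_smul_left, real_inner_comm u.2.1]
  ring

end ContactField

section Flow

variable {E F : Type*} [NormedAddCommGroup E] [NormedSpace ℝ E]
  [NormedAddCommGroup F] [NormedSpace ℝ F] {φ : ℝ × E → F}

theorem hasDerivAt_fderiv_partial_of_contDiff (hφ : ContDiff ℝ 2 φ) (w v : E) (s : ℝ) :
    HasDerivAt (fun r => fderiv ℝ (fun w' => φ (r, w')) w v)
      (fderiv ℝ (fun w' => deriv (fun r => φ (r, w')) s) w v) s := by
  have hφ' : Differentiable ℝ φ := hφ.differentiable two_ne_zero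
  have hDφ : Differentiable ℝ (fderiv ℝ φ) :=
    (hφ.fderiv_right (m := 1) le_rfl).differentiable one_ne_zero
  have hspace : ∀ r, fderiv ℝ (fun w' => φ (r, w')) w v = fderiv ℝ φ (r, w) (0, v) := fun r =>
    congrArg (· v) ((hφ' _).hasFDerivAt.comp w (hasFDerivAt_prodMk_right r w)).fderiv
  have htime : ∀ w', deriv (fun r => φ (r, w')) s = fderiv ℝ φ (s, w') (1, 0) := fun w' =>
    ((hφ' _).hasFDerivAt.comp_hasDerivAt s ((hasDerivAt_id s).prodMk (hasDerivAt_const s w'))).deriv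
  have hsymm : fderiv ℝ (fderiv ℝ φ) (s, w) (1, 0) (0, v)
      = fderiv ℝ (fderiv ℝ φ) (s, w) (0, v) (1, 0) :=
    hφ.contDiffAt.isSymmSndFDerivAt (by simp [minSmoothness_of_isRCLikeNormedField]) _ _
  have hcurve : HasDerivAt (fun r => fderiv ℝ φ (r, w) (0, v))
      (fderiv ℝ (fderiv ℝ φ) (s, w) (1, 0) (0, v)) s :=
    (ContinuousLinearMap.apply ℝ F ((0 : ℝ), v)).hasFDerivAt.comp_hasDerivAt s <|
      (hDφ _).hasFDerivAt.comp_hasDerivAt s ((hasDerivAt_id s).prodMk (hasDerivAt_const s w))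
  have hvar : fderiv ℝ (fun w' => fderiv ℝ φ (s, w') (1, 0)) w v
      = fderiv ℝ (fderiv ℝ φ) (s, w) (0, v) (1, 0) :=
    congrArg (· v) ((ContinuousLinearMap.apply ℝ F ((1 : ℝ), (0 : E))).hasFDerivAt.comp w <|
      (hDφ _).hasFDerivAt.comp w (hasFDerivAt_prodMk_right s w)).fderiv
  simp only [hspace, htime, hvar, ← hsymm]
  exact hcurve

theorem hasDerivAt_fderiv_flow {X : F → F} (hX : Differentiable ℝ X) (hφ : ContDiff ℝ 2 φ)
    (hflow : ∀ t w, HasDerivAt (fun s => φ (s, w)) (X (φ (t, w))) t) (w v : E) (s : ℝ) :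
    HasDerivAt (fun r => fderiv ℝ (fun w' => φ (r, w')) w v)
      (fderiv ℝ X (φ (s, w)) (fderiv ℝ (fun w' => φ (s, w')) w v)) s := by
  have hφs : DifferentiableAt ℝ (fun w' => φ (s, w')) w :=
    (hφ.differentiable two_ne_zero _).comp w (by fun_prop)
  have h := hasDerivAt_fderiv_partial_of_contDiff hφ w v s
  simp only [fun w' => (hflow s w').deriv] at h
  rwa [fderiv_fun_comp w (hX _) hφs] at h

end Flow

theorem eq_exp_neg_integral_mul_of_hasDerivAt {f a : ℝ → ℝ} (ha : Continuous a)
    (hf : ∀ s, HasDerivAt f (-a s * f s) s) (t : ℝ) :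
    f t = Real.exp (-∫ s in (0 : ℝ)..t, a s) * f 0 := by
  set A := fun r => ∫ s in (0 : ℝ)..r, a s
  have hA : ∀ r, HasDerivAt A (a r) r := fun r =>
    (ha.integral_hasStrictDerivAt 0 r).hasDerivAt
  have hconst : ∀ r, HasDerivAt (fun r => f r * Real.exp (A r)) 0 r := fun r =>
    ((hf r).mul (hA r).exp).congr_deriv (by ring)
  have h := is_const_of_deriv_eq_zero (fun r => (hconst r).differentiableAt)
    (fun r => (hconst r).deriv) t 0
  simp only [A, intervalIntegral.integral_same, Real.exp_zero, mul_one] at h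
  rw [Real.exp_neg, ← h, mul_comm, mul_inv_cancel_right₀ (Real.exp_pos _).ne']

theorem hasDerivAt_contactForm_flow {n : ℕ} {H : PhaseSpace n → ℝ} (hH : ContDiff ℝ 2 H)
    {φ : ℝ × PhaseSpace n → PhaseSpace n} (hφ : ContDiff ℝ 2 φ)
    (hflow : ∀ t w, HasDerivAt (fun s => φ (s, w)) (contactField H (φ (t, w))) t)
    (w v : PhaseSpace n) (s : ℝ) :
    HasDerivAt (fun r => contactForm (φ (r, w)) (fderiv ℝ (fun w' => φ (r, w')) w v))
      (-deriv (fun z => H ((φ (s, w)).1, (φ (s, w)).2.1, z)) (φ (s, w)).2.2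
        * contactForm (φ (s, w)) (fderiv ℝ (fun w' => φ (s, w')) w v)) s := by
  have hJ := hasDerivAt_fderiv_flow ((contDiff_contactField hH).differentiable one_ne_zero) hφ
    hflow w v s
  have hp : HasDerivAt (fun r => (φ (r, w)).2.1) (contactField H (φ (s, w))).2.1 s :=
    (hflow s w).snd.fst
  have hJz : HasDerivAt (fun r => (fderiv ℝ (fun w' => φ (r, w')) w v).2.2)
      (fderiv ℝ (contactField H) (φ (s, w)) (fderiv ℝ (fun w' => φ (s, w')) w v)).2.2 s :=
    hJ.snd.snd
  refine (hJz.sub (hp.inner ℝ hJ.fst)).congr_deriv ?_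
  rw [← contactForm_fderiv_contactField_sub hH, contactForm]
  ring

theorem contact_flow_conformal_factor_general {n : ℕ}
    (H : EuclideanSpace ℝ (Fin n) × EuclideanSpace ℝ (Fin n) × ℝ → ℝ)
    (hH : ContDiff ℝ 2 H)
    (φ : ℝ × (EuclideanSpace ℝ (Fin n) × EuclideanSpace ℝ (Fin n) × ℝ) →
      EuclideanSpace ℝ (Fin n) × EuclideanSpace ℝ (Fin n) × ℝ)
    (hφ : ContDiff ℝ 2 φ)
    (hφ0 : ∀ w, φ (0, w) = w)
    (hφflow : ∀ t w, HasDerivAt (fun s => φ (s, w)) (contactField H (φ (t, w))) t) :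
    ∀ (t : ℝ) (w v : EuclideanSpace ℝ (Fin n) × EuclideanSpace ℝ (Fin n) × ℝ),
      fderiv ℝ (fun w' => (φ (t, w')).2.2) w v
          - ⟪(φ (t, w)).2.1, fderiv ℝ (fun w' => (φ (t, w')).1) w v⟫
        = Real.exp (-(∫ s in (0 : ℝ)..t,
              deriv (fun ζ => H ((φ (s, w)).1, (φ (s, w)).2.1, ζ)) (φ (s, w)).2.2))
            * (v.2.2 - ⟪w.2.1, v.1⟫) := by
  intro t w v
  have hφt : DifferentiableAt ℝ (fun w' => φ (t, w')) w :=
    (hφ.differentiable two_ne_zero _).comp w (by fun_prop)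
  have hlhs : fderiv ℝ (fun w' => (φ (t, w')).2.2) w v
          - ⟪(φ (t, w)).2.1, fderiv ℝ (fun w' => (φ (t, w')).1) w v⟫
      = contactForm (φ (t, w)) (fderiv ℝ (fun w' => φ (t, w')) w v) := by
    rw [fderiv.snd hφt.snd, fderiv.fst hφt, fderiv.snd hφt]
    rfl
  have hcoeff : Continuous fun s =>
      deriv (fun ζ => H ((φ (s, w)).1, (φ (s, w)).2.1, ζ)) (φ (s, w)).2.2 :=
    (hH.deriv_partialZ (k := 1) le_rfl).continuous.comp (hφ.continuous.comp (by fun_prop))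
  have hinit : fderiv ℝ (fun w' => φ (0, w')) w v = v := by simp [hφ0]
  rw [hlhs, eq_exp_neg_integral_mul_of_hasDerivAt hcoeff
    (hasDerivAt_contactForm_flow hH hφ hφflow w v) t, hinit, hφ0]
  rfl

/-- Conformal factor of the contact Hamiltonian flow: the pullback of the contact form
`θ = dz − ⟨p, dx⟩` under the time-`t` flow equals `exp(−∫₀ᵗ ∂_z H ∘ φ_s ds) · θ`. -/
theorem contact_flow_conformal_factor {n : ℕ} (hn : 1 ≤ n)
    (H : EuclideanSpace ℝ (Fin n) × EuclideanSpace ℝ (Fin n) × ℝ → ℝ)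
    (hH : ContDiff ℝ 2 H)
    (φ : ℝ × (EuclideanSpace ℝ (Fin n) × EuclideanSpace ℝ (Fin n) × ℝ) →
      EuclideanSpace ℝ (Fin n) × EuclideanSpace ℝ (Fin n) × ℝ)
    (hφ : ContDiff ℝ 2 φ)
    (hφ0 : ∀ w, φ (0, w) = w)
    (hφflow : ∀ t w, HasDerivAt (fun s => φ (s, w)) (contactField H (φ (t, w))) t) :
    ∀ (t : ℝ) (w v : EuclideanSpace ℝ (Fin n) × EuclideanSpace ℝ (Fin n) × ℝ),
      fderiv ℝ (fun w' => (φ (t, w')).2.2) w v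
          - ⟪(φ (t, w)).2.1, fderiv ℝ (fun w' => (φ (t, w')).1) w v⟫
        = Real.exp (-(∫ s in (0 : ℝ)..t,
              deriv (fun ζ => H ((φ (s, w)).1, (φ (s, w)).2.1, ζ)) (φ (s, w)).2.2))
            * (v.2.2 - ⟪w.2.1, v.1⟫) :=
  contact_flow_conformal_factor_general H hH φ hφ hφ0 hφflow
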